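/- Let d ≥ 2 and let (X_i)_{i∈ℤ^d} be an orthomartingale difference random field with respect to a commuting filtration (F_i)_{i∈ℤ^d}. Then for every n = (n_1,…,n_d) ∈ ℕ^d with n ≽ 1 and every x > 0, P( max_{1≼i≼n} |S_i| > x ) ≤ ∫_1^∞ P( max_{1≤i_q≤n_q, 1≤q≤d−1} |S_{(i_1,…,i_{d−1},n_d)}| > x u / 2 ) du. -/

import Mathlib

open MeasureTheory ProbabilityTheory

/-- `(F i)_{i ∈ ℤ^d}` is a commuting filtration on `(Ω, m0, μ)`:
each `F i` is a sub-σ-algebra, `F` is monotone for the coordinatewise order, and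
conditional expectations with respect to the `F i` commute in the sense that
`E[E[Y | F i] | F j] = E[Y | F (min(i,j))]` a.s. for every integrable `Y`. -/
def CommutingFiltration {Ω : Type*} [m0 : MeasurableSpace Ω] (μ : Measure Ω)
    {d : ℕ} (F : (Fin d → ℤ) → MeasurableSpace Ω) : Prop :=
  (∀ i, F i ≤ m0) ∧
  (∀ i j : Fin d → ℤ, i ≤ j → F i ≤ F j) ∧
  (∀ Y : Ω → ℝ, Integrable Y μ → ∀ i j : Fin d → ℤ,
    μ[(μ[Y | F i]) | F j] =ᵐ[μ] μ[Y | F (fun q => min (i q) (j q))])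

/-- `(X i)_{i ∈ ℤ^d}` is an orthomartingale difference random field with respect to
the commuting filtration `(F i)`: each `X i` is integrable, `F i`-measurable, and
`E[X i | F (i - e q)] = 0` a.s. for every coordinate `q`. -/
def OrthomartingaleDiff {Ω : Type*} [m0 : MeasurableSpace Ω] (μ : Measure Ω)
    {d : ℕ} (F : (Fin d → ℤ) → MeasurableSpace Ω) (X : (Fin d → ℤ) → Ω → ℝ) : Prop :=
  (∀ i, Integrable (X i) μ) ∧
  (∀ i, StronglyMeasurable[F i] (X i)) ∧
  (∀ (i : Fin d → ℤ) (q : Fin d), μ[X i | F (i - Pi.single q 1)] =ᵐ[μ] 0)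


/-! Freeze the first `d - 1` coordinates at `n' = (n_1, …, n_{d-1})` and let the last one run:
`M_k = max_{1 ≼ i' ≼ n'} |S_{(i', k)}|`. Each `k ↦ S_{(i', k)}` is a martingale for the filtration
`k ↦ F_{(n', k)}`, since commutation turns the orthomartingale property in the last direction into
`E[X_j | F_{(n', k)}] = 0` whenever `j_d > k`; hence `M` is a nonnegative submartingale. Doob's
maximal inequality gives `x P(max_{k ≤ n_d} M_k ≥ x) ≤ E[M_{n_d}; max_k M_k ≥ x]`; splitting
`M_{n_d}` at level `x / 2` and applying the layer-cake formula to `(M_{n_d} - x/2)⁺` turns this into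
the tail integral. -/

namespace Fin

variable {α : Type*} [Preorder α] {e : ℕ}

theorem snoc_le_snoc_iff {i j : Fin e → α} {a b : α} :
    (snoc i a : Fin (e + 1) → α) ≤ snoc j b ↔ i ≤ j ∧ a ≤ b := by
  simp [Pi.le_def, forall_iff_castSucc, and_comm]

theorem le_snoc_iff {i : Fin (e + 1) → α} {j : Fin e → α} {b : α} :
    i ≤ snoc j b ↔ init i ≤ j ∧ i (last e) ≤ b := by
  conv_lhs => rw [← snoc_init_self i]
  exact snoc_le_snoc_iff

end Fin

theorem setIntegral_Ioi_comp_add_right (g : ℝ → ℝ) (a c : ℝ) :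
    ∫ t in Set.Ioi a, g (t + c) = ∫ t in Set.Ioi (a + c), g t := by
  simpa [Set.preimage_add_const_Ioi] using
    (measurePreserving_add_right (volume : Measure ℝ) c).setIntegral_preimage_emb
      (MeasurableEquiv.addRight c).measurableEmbedding g (Set.Ioi (a + c))

section TailBound

variable {Ω : Type*} {m0 : MeasurableSpace Ω} {μ : Measure Ω} [IsFiniteMeasure μ]

theorem integral_posPart_sub_eq_mul_integral_tail {Y : Ω → ℝ} (hY : Integrable Y μ)
    {c : ℝ} (hc : 0 < c) :
    ∫ ω, max (Y ω - c) 0 ∂μ = c * ∫ u in Set.Ioi 1, μ.real {ω | c * u < Y ω} := by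
  have hint : Integrable (fun ω => max (Y ω - c) 0) μ := (hY.sub (integrable_const c)).pos_part
  have hlevel : ∀ t ∈ Set.Ioi (0 : ℝ),
      μ.real {ω | t < max (Y ω - c) 0} = μ.real {ω | t + c < Y ω} := by
    intro t (ht : 0 < t)
    congr 1
    ext ω
    simp only [Set.mem_ofPred_eq, lt_max_iff, ht.not_gt, or_false]
    constructor <;> intro h <;> linarith
  rw [hint.integral_eq_integral_meas_lt (.of_forall fun ω => le_max_right _ _),
    setIntegral_congr_fun measurableSet_Ioi hlevel,
    setIntegral_Ioi_comp_add_right (fun s => μ.real {ω | s < Y ω}),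
    integral_comp_mul_left_Ioi (fun s => μ.real {ω | s < Y ω}) 1 hc, smul_eq_mul,
    mul_inv_cancel_left₀ hc.ne', zero_add, mul_one]

theorem measureReal_le_integral_tail_of_mul_le_setIntegral {Y : Ω → ℝ} (hY : Integrable Y μ)
    {A : Set Ω} (hA : MeasurableSet A) {x : ℝ} (hx : 0 < x)
    (h : x * μ.real A ≤ ∫ ω in A, Y ω ∂μ) :
    μ.real A ≤ ∫ u in Set.Ioi 1, μ.real {ω | x * u / 2 < Y ω} := by
  have hx2 : 0 < x / 2 := half_pos hx
  have hshift : Integrable (fun ω => Y ω - x / 2) μ := hY.sub (integrable_const _)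
  have hint : Integrable (fun ω => max (Y ω - x / 2) 0) μ := hshift.pos_part
  have hsplit : ∫ ω in A, Y ω ∂μ ≤ x / 2 * μ.real A + ∫ ω, max (Y ω - x / 2) 0 ∂μ :=
    calc ∫ ω in A, Y ω ∂μ = ∫ ω in A, (x / 2 + (Y ω - x / 2)) ∂μ := by simp
      _ = x / 2 * μ.real A + ∫ ω in A, (Y ω - x / 2) ∂μ := by
        rw [integral_add (integrable_const _) hshift.integrableOn,
          setIntegral_const, smul_eq_mul, mul_comm]
      _ ≤ x / 2 * μ.real A + ∫ ω, max (Y ω - x / 2) 0 ∂μ := by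
        gcongr
        exact (setIntegral_mono_on hshift.integrableOn hint.integrableOn
          hA fun ω _ => le_max_left _ _).trans
          (setIntegral_le_integral hint (.of_forall fun ω => le_max_right _ _))
  rw [integral_posPart_sub_eq_mul_integral_tail hY hx2] at hsplit
  simp_rw [div_mul_eq_mul_div] at hsplit
  exact le_of_mul_le_mul_left (by linarith) hx2

theorem MeasureTheory.Submartingale.measureReal_le_integral_tail {𝒢 : Filtration ℕ m0}
    {f : ℕ → Ω → ℝ} (hf : Submartingale f 𝒢 μ) (hf0 : 0 ≤ f) {x : ℝ} (hx : 0 < x) (N : ℕ) :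
    μ.real {ω | x ≤ (Finset.range (N + 1)).sup' Finset.nonempty_range_add_one fun k => f k ω} ≤
      ∫ u in Set.Ioi 1, μ.real {ω | x * u / 2 < f N ω} := by
  set A := {ω | x ≤ (Finset.range (N + 1)).sup' Finset.nonempty_range_add_one fun k => f k ω}
  have hA : MeasurableSet A :=
    measurableSet_le measurable_const (Finset.measurable_range_sup''
      fun k _ => (hf.stronglyMeasurable k).measurable.le (𝒢.le k))
  have hdoob := maximal_ineq hf hf0 (ε := x.toNNReal) N
  rw [Real.coe_toNNReal x hx.le] at hdoob
  refine measureReal_le_integral_tail_of_mul_le_setIntegral (hf.integrable N) hA hx ?_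
  have := ENNReal.toReal_mono ENNReal.ofReal_ne_top hdoob
  rwa [ENNReal.toReal_mul, ENNReal.toReal_ofReal (setIntegral_nonneg hA fun ω _ => hf0 N ω),
    ENNReal.coe_toReal, Real.coe_toNNReal x hx.le] at this

end TailBound

theorem MeasureTheory.Martingale.submartingale_abs {Ω T : Type*} {m0 : MeasurableSpace Ω}
    {μ : Measure Ω} [Preorder T] {𝒢 : Filtration T m0} {f : T → Ω → ℝ} (hf : Martingale f 𝒢 μ) :
    Submartingale (fun k ω => |f k ω|) 𝒢 μ := by
  have habs : (fun k ω => |f k ω|) = f ⊔ -f := by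
    ext k ω
    exact abs_eq_max_neg
  rw [habs]
  exact hf.submartingale.sup hf.neg.submartingale

theorem MeasureTheory.Submartingale.finset_sup' {Ω ι T : Type*} {m0 : MeasurableSpace Ω}
    {μ : Measure Ω} [Preorder T] {𝒢 : Filtration T m0} {s : Finset ι} (hs : s.Nonempty)
    {f : ι → T → Ω → ℝ} (hf : ∀ i ∈ s, Submartingale (f i) 𝒢 μ) :
    Submartingale (fun t ω => s.sup' hs fun i => f i t ω) 𝒢 μ := by
  induction hs using Finset.Nonempty.cons_induction with
  | singleton i => simpa using hf i (Finset.mem_singleton_self i)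
  | cons i s his hs ih =>
    have hcons : (fun t ω => (s.cons i his).sup' (Finset.cons_nonempty his) fun j => f j t ω) =
        f i ⊔ fun t ω => s.sup' hs fun j => f j t ω := by
      ext t ω
      exact Finset.sup'_cons hs _
    rw [hcons]
    exact (hf i (Finset.mem_cons_self i s)).sup
      (ih fun j hj => hf j (Finset.mem_cons_of_mem hj))

section Slices

variable {Ω : Type*} {m0 : MeasurableSpace Ω} {μ : Measure Ω}

noncomputable def sliceMax {e : ℕ} (X : (Fin (e + 1) → ℤ) → Ω → ℝ) {n' : Fin e → ℤ}
    (hn' : (Finset.Icc 1 n').Nonempty) (k : ℕ) (ω : Ω) : ℝ :=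
  (Finset.Icc 1 n').sup' hn' fun i' =>
    |∑ j ∈ Finset.Icc 1 (Fin.snoc i' (k : ℤ) : Fin (e + 1) → ℤ), X j ω|

theorem sliceMax_nonneg {e : ℕ} (X : (Fin (e + 1) → ℤ) → Ω → ℝ) {n' : Fin e → ℤ}
    (hn' : (Finset.Icc 1 n').Nonempty) : 0 ≤ sliceMax X hn' :=
  fun _ _ => (Finset.le_sup'_iff hn').2 ⟨_, hn'.choose_spec, abs_nonneg _⟩

theorem abs_partialSum_le_sup'_sliceMax {e : ℕ} (X : (Fin (e + 1) → ℤ) → Ω → ℝ)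
    {n i : Fin (e + 1) → ℤ} (hi : i ∈ Finset.Icc 1 n) (hn' : (Finset.Icc 1 (Fin.init n)).Nonempty)
    {N : ℕ} (hN : (N : ℤ) = n (Fin.last e)) (ω : Ω) :
    |∑ j ∈ Finset.Icc 1 i, X j ω| ≤
      (Finset.range (N + 1)).sup' Finset.nonempty_range_add_one fun k => sliceMax X hn' k ω := by
  obtain ⟨hi1, hin⟩ := Finset.mem_Icc.1 hi
  obtain ⟨k, hk⟩ : ∃ k : ℕ, (k : ℤ) = i (Fin.last e) :=
    ⟨_, Int.toNat_of_nonneg (zero_le_one.trans (hi1 _))⟩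
  have hkN : k ∈ Finset.range (N + 1) := by
    have : i (Fin.last e) ≤ n (Fin.last e) := hin _
    rw [Finset.mem_range]
    omega
  have hinit : Fin.init i ∈ Finset.Icc 1 (Fin.init n) :=
    Finset.mem_Icc.2 ⟨fun p => hi1 p.castSucc, fun p => hin p.castSucc⟩
  calc |∑ j ∈ Finset.Icc 1 i, X j ω|
      = |∑ j ∈ Finset.Icc 1 (Fin.snoc (Fin.init i) (k : ℤ) : Fin (e + 1) → ℤ), X j ω| := by
        rw [hk, Fin.snoc_init_self]
    _ ≤ sliceMax X hn' k ω := Finset.le_sup'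
        (fun i' => |∑ j ∈ Finset.Icc 1 (Fin.snoc i' (k : ℤ) : Fin (e + 1) → ℤ), X j ω|) hinit
    _ ≤ _ := Finset.le_sup' (fun k => sliceMax X hn' k ω) hkN

def CommutingFiltration.lastCoordFiltration {e : ℕ}
    {F : (Fin (e + 1) → ℤ) → MeasurableSpace Ω} (hF : CommutingFiltration μ F) (n' : Fin e → ℤ) :
    Filtration ℕ m0 where
  seq k := F (Fin.snoc n' k)
  mono' _ _ hkl := hF.2.1 _ _ (Fin.snoc_le_snoc_iff.2 ⟨le_rfl, Int.ofNat_le.2 hkl⟩)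
  le' _ := hF.1 _

variable [IsFiniteMeasure μ]

/-- Commutation reduces `E[X_j | F_i]` to `E[E[X_j | F_{j - e_q}] | F_i] = 0`, because
`min(j, i) = min(j - e_q, i)` as soon as `i_q < j_q`. -/
theorem OrthomartingaleDiff.condExp_eq_zero_of_lt {d : ℕ}
    {F : (Fin d → ℤ) → MeasurableSpace Ω} {X : (Fin d → ℤ) → Ω → ℝ}
    (hF : CommutingFiltration μ F) (hX : OrthomartingaleDiff μ F X)
    {i j : Fin d → ℤ} {q : Fin d} (hq : i q < j q) :
    μ[X j | F i] =ᵐ[μ] 0 := by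
  have hmin : (fun p => min (j p) (i p)) =
      fun p => min ((j - Pi.single q 1 : Fin d → ℤ) p) (i p) := by
    ext p
    rcases eq_or_ne p q with rfl | hp
    · simp only [Pi.sub_apply, Pi.single_eq_same]
      omega
    · simp [hp]
  calc μ[X j | F i] = μ[μ[X j | F j] | F i] := by
        rw [condExp_of_stronglyMeasurable (hF.1 j) (hX.2.1 j) (hX.1 j)]
    _ =ᵐ[μ] μ[X j | F fun p => min (j p) (i p)] := hF.2.2 _ (hX.1 j) j i
    _ = μ[X j | F fun p => min ((j - Pi.single q 1 : Fin d → ℤ) p) (i p)] := by rw [hmin]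
    _ =ᵐ[μ] μ[μ[X j | F (j - Pi.single q 1)] | F i] := (hF.2.2 _ (hX.1 j) _ i).symm
    _ =ᵐ[μ] μ[0 | F i] := condExp_congr_ae (hX.2.2 j q)
    _ = 0 := condExp_zero

theorem OrthomartingaleDiff.martingale_lastCoord {e : ℕ}
    {F : (Fin (e + 1) → ℤ) → MeasurableSpace Ω} {X : (Fin (e + 1) → ℤ) → Ω → ℝ}
    (hF : CommutingFiltration μ F) (hX : OrthomartingaleDiff μ F X)
    {i' n' : Fin e → ℤ} (hi' : i' ≤ n') :
    Martingale (fun k : ℕ => ∑ j ∈ Finset.Icc 1 (Fin.snoc i' (k : ℤ) : Fin (e + 1) → ℤ), X j)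
      (hF.lastCoordFiltration n') μ := by
  refine martingale_of_condExp_sub_eq_zero_nat (fun k => ?_)
    (fun k => integrable_finsetSum' _ fun j _ => hX.1 j) fun k => ?_
  · refine Finset.stronglyMeasurable_sum _ fun j hj => (hX.2.1 j).mono (hF.2.1 _ _ ?_)
    exact (Finset.mem_Icc.1 hj).2.trans (Fin.snoc_le_snoc_iff.2 ⟨hi', le_rfl⟩)
  · have hsub : Finset.Icc 1 (Fin.snoc i' (k : ℤ) : Fin (e + 1) → ℤ) ⊆
        Finset.Icc 1 (Fin.snoc i' ((k + 1 : ℕ) : ℤ)) :=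
      Finset.Icc_subset_Icc_right (Fin.snoc_le_snoc_iff.2 ⟨le_rfl, by omega⟩)
    rw [← Finset.sum_sdiff_eq_sub hsub]
    refine (condExp_finsetSum (fun j _ => hX.1 j) _).trans ?_
    refine (eventuallyEq_sum (g := fun _ => 0) fun j hj => ?_).trans (by simp)
    rw [Finset.mem_sdiff, Finset.mem_Icc, Finset.mem_Icc] at hj
    obtain ⟨⟨hj1, hjk⟩, hjk'⟩ := hj
    refine hX.condExp_eq_zero_of_lt hF (q := Fin.last e) ?_
    refine lt_of_not_ge fun hlast => hjk' ⟨hj1, Fin.le_snoc_iff.2 ⟨(Fin.le_snoc_iff.1 hjk).1, ?_⟩⟩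
    simpa using hlast

theorem OrthomartingaleDiff.submartingale_sliceMax {e : ℕ}
    {F : (Fin (e + 1) → ℤ) → MeasurableSpace Ω} {X : (Fin (e + 1) → ℤ) → Ω → ℝ}
    (hF : CommutingFiltration μ F) (hX : OrthomartingaleDiff μ F X)
    {n' : Fin e → ℤ} (hn' : (Finset.Icc 1 n').Nonempty) :
    Submartingale (sliceMax X hn') (hF.lastCoordFiltration n') μ :=
  Submartingale.finset_sup' hn' fun i' hi' => by
    simpa only [Finset.sum_apply] using
      (hX.martingale_lastCoord hF (Finset.mem_Icc.1 hi').2).submartingale_abs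

end Slices

theorem max_tail_integral_bound_general (e : ℕ)
    {Ω : Type*} {m0 : MeasurableSpace Ω} (μ : Measure Ω) [IsProbabilityMeasure μ]
    (F : (Fin (e + 1) → ℤ) → MeasurableSpace Ω) (X : (Fin (e + 1) → ℤ) → Ω → ℝ)
    (hF : CommutingFiltration μ F) (hX : OrthomartingaleDiff μ F X)
    (n : Fin (e + 1) → ℤ) (hn : (1 : Fin (e + 1) → ℤ) ≤ n)
    (x : ℝ) (hx : 0 < x) :
    (μ {ω | ∃ i ∈ Finset.Icc (1 : Fin (e + 1) → ℤ) n,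
        x < |∑ j ∈ Finset.Icc 1 i, X j ω|}).toReal ≤
      ∫ u in Set.Ioi (1 : ℝ),
        (μ {ω | ∃ i' ∈ Finset.Icc (1 : Fin e → ℤ) (Fin.init n),
          x * u / 2 <
            |∑ j ∈ Finset.Icc 1 (Fin.snoc i' (n (Fin.last e)) : Fin (e + 1) → ℤ),
              X j ω|}).toReal := by
  obtain ⟨N, hN⟩ : ∃ N : ℕ, (N : ℤ) = n (Fin.last e) :=
    ⟨_, Int.toNat_of_nonneg (zero_le_one.trans (hn _))⟩
  have hn' : (Finset.Icc 1 (Fin.init n)).Nonempty := Finset.nonempty_Icc.2 fun p => hn p.castSucc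
  have hmax : {ω | ∃ i ∈ Finset.Icc 1 n, x < |∑ j ∈ Finset.Icc 1 i, X j ω|} ⊆
      {ω | x ≤ (Finset.range (N + 1)).sup' Finset.nonempty_range_add_one
        fun k => sliceMax X hn' k ω} := by
    rintro ω ⟨i, hi, hxi⟩
    exact hxi.le.trans (abs_partialSum_le_sup'_sliceMax X hi hn' hN ω)
  calc _ ≤ _ := measureReal_mono hmax
    _ ≤ ∫ u in Set.Ioi 1, μ.real {ω | x * u / 2 < sliceMax X hn' N ω} :=
        (hX.submartingale_sliceMax hF hn').measureReal_le_integral_tail (sliceMax_nonneg X hn') hx N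
    _ = _ := by simp only [sliceMax, Finset.lt_sup'_iff, hN]; rfl

/-- Doob-type step of the induction: if `d = e + 1 ≥ 2` and `(X_i)_{i∈ℤ^d}` is an
orthomartingale difference random field with respect to a commuting filtration,
then for every `n ≽ 1` and every `x > 0`,
`P(max_{1≼i≼n} |S_i| > x)
  ≤ ∫_1^∞ P(max_{1≤i_q≤n_q, q<d} |S_{(i_1,…,i_{d-1},n_d)}| > x u / 2) du`. -/
theorem max_tail_integral_bound (e : ℕ) (he : 1 ≤ e)
    {Ω : Type*} {m0 : MeasurableSpace Ω} (μ : Measure Ω) [IsProbabilityMeasure μ]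
    (F : (Fin (e + 1) → ℤ) → MeasurableSpace Ω) (X : (Fin (e + 1) → ℤ) → Ω → ℝ)
    (hF : CommutingFiltration μ F) (hX : OrthomartingaleDiff μ F X)
    (n : Fin (e + 1) → ℤ) (hn : (1 : Fin (e + 1) → ℤ) ≤ n)
    (x : ℝ) (hx : 0 < x) :
    (μ {ω | ∃ i ∈ Finset.Icc (1 : Fin (e + 1) → ℤ) n,
        x < |∑ j ∈ Finset.Icc 1 i, X j ω|}).toReal ≤
      ∫ u in Set.Ioi (1 : ℝ),
        (μ {ω | ∃ i' ∈ Finset.Icc (1 : Fin e → ℤ) (Fin.init n),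
          x * u / 2 <
            |∑ j ∈ Finset.Icc 1 (Fin.snoc i' (n (Fin.last e)) : Fin (e + 1) → ℤ),
              X j ω|}).toReal :=
  max_tail_integral_bound_general e (m0 := m0) μ F X hF hX n hn x hx
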